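/- For every natural number m ≥ 31, φ(m) > m^(log 2 / log 3), where φ is Euler's totient function. More precisely, the only natural numbers m ≥ 1 for which φ(m) ≤ m^(log 2 / log 3) are m = 1, 2, 3, 4, 6, 10, 12, 18, 30. -/

import Mathlib

/-!
Let `α = log 2 / log 3`, so that `3 ^ α = 2` and `α < 2 / 3`. The ratio `c(m) = φ(m) / m ^ α` is
multiplicative. For an odd prime power `c(p ^ k) ≥ 1`, with equality only at `3`, and for odd `n`
outside `{1, 3, 5, 9, 15}` even `c(n) > 2 ^ α = 1 / c(2)`: on prime powers this is the integer
inequality `(2 p ^ k) ^ 2 < φ(p ^ k) ^ 3`, and a coprime product inherits it from a factor, `45` being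
the only such product of two members of the set that is not itself a member. For `m = 2 ^ a * n` with
`n` odd, `c(2 ^ a) ≥ c(2)` and `c(2 ^ a) > 1` once `a ≥ 3`, which leaves the finitely many
`m = 2 ^ a * n` with `a ≤ 2` and `n ∈ {1, 3, 5, 9, 15}`.
-/

open Real
open scoped Nat

local notation "α" => Real.log 2 / Real.log 3

lemma three_rpow_log_two_div_log_three : (3 : ℝ) ^ α = 2 := by
  rw [rpow_def_of_pos (by norm_num), mul_div_cancel₀ _ (log_pos (by norm_num)).ne',
    exp_log (by norm_num)]

lemma log_two_div_log_three_nonneg : 0 ≤ α := by positivity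

lemma log_two_div_log_three_lt : α < 2 / 3 := by
  have h : log (2 ^ 3 : ℝ) < log (3 ^ 2) := log_lt_log (by norm_num) (by norm_num)
  rw [log_pow, log_pow] at h
  rw [div_lt_div_iff₀ (log_pos (by norm_num)) (by norm_num)]
  push_cast at h
  linarith

lemma rpow_lt_of_sq_lt_pow_three {x y e : ℝ} (hx : 1 ≤ x) (hy : 0 ≤ y) (he : e ≤ 2 / 3)
    (h : x ^ 2 < y ^ 3) : x ^ e < y := by
  refine lt_of_pow_lt_pow_left₀ 3 hy ?_
  calc (x ^ e) ^ 3 = x ^ (3 * e) := by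
        rw [← rpow_natCast, ← rpow_mul (by linarith), mul_comm]; norm_num
    _ ≤ x ^ (2 : ℝ) := rpow_le_rpow_of_exponent_le hx (by linarith)
    _ = x ^ 2 := rpow_two x
    _ < y ^ 3 := h

lemma natCast_rpow_lt_of_sq_lt_pow_three {x y : ℕ} (hx : x ≠ 0) (h : x ^ 2 < y ^ 3) :
    (x : ℝ) ^ α < y :=
  rpow_lt_of_sq_lt_pow_three (by exact_mod_cast Nat.one_le_iff_ne_zero.mpr hx) (Nat.cast_nonneg y)
    log_two_div_log_three_lt.le (by exact_mod_cast h)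

lemma le_rpow_of_pow_le {x y : ℝ} {a b : ℕ} (hx : 0 ≤ x) (hb : b ≠ 0)
    (h3 : 3 ^ a ≤ x ^ b) (h2 : y ^ b ≤ 2 ^ a) : y ≤ x ^ α := by
  refine le_of_pow_le_pow_left₀ hb (by positivity) ?_
  calc y ^ b ≤ ((3 : ℝ) ^ α) ^ a := by rwa [three_rpow_log_two_div_log_three]
    _ = ((3 : ℝ) ^ a) ^ α := rpow_pow_comm (by norm_num) _ _
    _ ≤ (x ^ b) ^ α := rpow_le_rpow (by positivity) h3 log_two_div_log_three_nonneg
    _ = (x ^ α) ^ b := (rpow_pow_comm hx _ _).symm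

lemma natCast_le_rpow_of_pow_le {x y a b : ℕ} (hb : b ≠ 0) (h3 : 3 ^ a ≤ x ^ b)
    (h2 : y ^ b ≤ 2 ^ a) : (y : ℝ) ≤ (x : ℝ) ^ α :=
  le_rpow_of_pow_le (Nat.cast_nonneg x) hb (by exact_mod_cast h3) (by exact_mod_cast h2)

lemma natCast_mul_rpow (a b : ℕ) (e : ℝ) :
    ((a * b : ℕ) : ℝ) ^ e = (a : ℝ) ^ e * (b : ℝ) ^ e := by
  push_cast
  exact mul_rpow (Nat.cast_nonneg a) (Nat.cast_nonneg b)

lemma natCast_pow_rpow (p k : ℕ) (e : ℝ) : ((p ^ k : ℕ) : ℝ) ^ e = ((p : ℝ) ^ e) ^ k := by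
  push_cast
  exact (rpow_pow_comm (Nat.cast_nonneg p) e k).symm

lemma rpow_le_sub_one_of_prime {p : ℕ} (hp : p.Prime) (hp2 : p ≠ 2) : (p : ℝ) ^ α ≤ p - 1 := by
  obtain rfl | hp4 : p = 3 ∨ 4 ≤ p := by
    have := hp.two_le
    have := hp.eq_one_or_self_of_dvd 3
    omega
  · rw [Nat.cast_ofNat, three_rpow_log_two_div_log_three]; norm_num
  · have hp4' : (4 : ℝ) ≤ p := by exact_mod_cast hp4
    exact (rpow_lt_of_sq_lt_pow_three (by linarith) (by linarith)
      log_two_div_log_three_lt.le (by nlinarith)).le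

lemma rpow_le_totient_prime_pow {p : ℕ} (hp : p.Prime) (hp2 : p ≠ 2) (k : ℕ) :
    ((p ^ k : ℕ) : ℝ) ^ α ≤ φ (p ^ k) := by
  rcases k.eq_zero_or_pos with rfl | hk
  · simp
  rw [natCast_pow_rpow, Nat.totient_prime_pow hp hk]
  have hp1 : (1 : ℝ) ≤ p := by exact_mod_cast hp.one_lt.le
  calc ((p : ℝ) ^ α) ^ k ≤ ((p : ℝ) - 1) ^ k :=
        pow_le_pow_left₀ (by positivity) (rpow_le_sub_one_of_prime hp hp2) k
    _ = ((p : ℝ) - 1) ^ (k - 1) * (p - 1) := by rw [← pow_sub_one_mul hk.ne']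
    _ ≤ (p : ℝ) ^ (k - 1) * (p - 1) := by gcongr; linarith
    _ = ((p ^ (k - 1) * (p - 1) : ℕ) : ℝ) := by push_cast [hp.one_le]; ring

lemma rpow_le_totient_of_odd {n : ℕ} (hn : Odd n) : (n : ℝ) ^ α ≤ φ n := by
  induction n using Nat.recOnPosPrimePosCoprime with
  | zero => simp at hn
  | one => simp
  | prime_pow p k hp hk =>
    refine rpow_le_totient_prime_pow hp ?_ k
    rintro rfl
    exact hn.not_two_dvd_nat (dvd_pow_self 2 hk.ne')
  | coprime a b _ _ hab iha ihb =>
    obtain ⟨ha, hb⟩ := Nat.odd_mul.mp hn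
    rw [natCast_mul_rpow, Nat.totient_mul hab, Nat.cast_mul]
    exact mul_le_mul (iha ha) (ihb hb) (by positivity) (by positivity)

lemma sq_two_mul_prime_pow_lt_totient_pow_three {p k : ℕ} (hp : p.Prime) (hp2 : p ≠ 2)
    (hpk : p ^ (k + 1) ∉ ({3, 5, 9} : Finset ℕ)) : (2 * p ^ (k + 1)) ^ 2 < φ (p ^ (k + 1)) ^ 3 := by
  rw [Nat.totient_prime_pow_succ hp]
  suffices h : 4 * p ^ 2 < p ^ k * (p - 1) ^ 3 by
    calc (2 * p ^ (k + 1)) ^ 2 = 4 * p ^ 2 * p ^ (2 * k) := by ring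
      _ < p ^ k * (p - 1) ^ 3 * p ^ (2 * k) := by gcongr; exact pow_pos hp.pos _
      _ = (p ^ k * (p - 1)) ^ 3 := by ring
  obtain rfl | rfl | hp7 : p = 3 ∨ p = 5 ∨ 7 ≤ p := by
    have := hp.two_le
    have := hp.eq_one_or_self_of_dvd 3
    have := hp.eq_one_or_self_of_dvd 2
    omega
  · have hk : 2 ≤ k := by
      by_contra! hk
      interval_cases k <;> simp at hpk
    calc 4 * 3 ^ 2 < 3 ^ 2 * (3 - 1) ^ 3 := by norm_num
      _ ≤ 3 ^ k * (3 - 1) ^ 3 := by gcongr; omega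
  · have hk : 1 ≤ k := by
      by_contra! hk
      interval_cases k; simp at hpk
    calc 4 * 5 ^ 2 < 5 ^ 1 * (5 - 1) ^ 3 := by norm_num
      _ ≤ 5 ^ k * (5 - 1) ^ 3 := by gcongr; omega
  · obtain ⟨q, rfl⟩ := Nat.exists_eq_add_of_le hp7
    calc 4 * (7 + q) ^ 2 < (7 + q - 1) ^ 3 := by
          rw [show 7 + q - 1 = 6 + q by omega]; nlinarith
      _ ≤ (7 + q) ^ k * (7 + q - 1) ^ 3 :=
          Nat.le_mul_of_pos_left _ (pow_pos (by omega) k)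

lemma rpow_two_mul_mul_lt_totient {a b : ℕ} (ha : ((2 * a : ℕ) : ℝ) ^ α < φ a) (hb : Odd b)
    (hab : a.Coprime b) : ((2 * (a * b) : ℕ) : ℝ) ^ α < φ (a * b) := by
  have hb0 : (0 : ℝ) < b := by exact_mod_cast hb.pos
  rw [← mul_assoc, natCast_mul_rpow, Nat.totient_mul hab, Nat.cast_mul (φ a)]
  exact mul_lt_mul ha (rpow_le_totient_of_odd hb) (rpow_pos_of_pos hb0 _) (Nat.cast_nonneg _)

lemma rpow_two_mul_lt_totient_of_odd {n : ℕ} (hn : Odd n)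
    (hS : n ∉ ({1, 3, 5, 9, 15} : Finset ℕ)) : ((2 * n : ℕ) : ℝ) ^ α < φ n := by
  induction n using Nat.recOnPosPrimePosCoprime with
  | zero => simp at hn
  | one => simp at hS
  | prime_pow p k hp hk =>
    obtain ⟨k, rfl⟩ := Nat.exists_eq_add_one_of_ne_zero hk.ne'
    have hp2 : p ≠ 2 := by
      rintro rfl
      exact hn.not_two_dvd_nat (dvd_pow_self 2 (by omega))
    refine natCast_rpow_lt_of_sq_lt_pow_three (by positivity [hp.pos]) ?_
    exact sq_two_mul_prime_pow_lt_totient_pow_three hp hp2 (by simp_all)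
  | coprime a b ha1 hb1 hab iha ihb =>
    obtain ⟨ha, hb⟩ := Nat.odd_mul.mp hn
    by_cases haS : a ∈ ({1, 3, 5, 9, 15} : Finset ℕ)
    · by_cases hbS : b ∈ ({1, 3, 5, 9, 15} : Finset ℕ)
      · have h45 : a * b = 45 := by
          have key : ∀ a ∈ ({1, 3, 5, 9, 15} : Finset ℕ), ∀ b ∈ ({1, 3, 5, 9, 15} : Finset ℕ),
              1 < a → 1 < b → a.Coprime b → a * b ∉ ({1, 3, 5, 9, 15} : Finset ℕ) → a * b = 45 := by
            decide
          exact key a haS b hbS ha1 hb1 hab hS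
        rw [h45]
        exact natCast_rpow_lt_of_sq_lt_pow_three (by norm_num) (by decide)
      · rw [mul_comm a b]
        exact rpow_two_mul_mul_lt_totient (ihb hb hbS) ha hab.symm
    · exact rpow_two_mul_mul_lt_totient (iha ha haS) hb hab

lemma rpow_two_pow_le_two_rpow_mul_totient (a : ℕ) :
    ((2 ^ a : ℕ) : ℝ) ^ α ≤ 2 ^ α * φ (2 ^ a) := by
  rcases a.eq_zero_or_pos with rfl | ha
  · simpa using one_le_rpow one_le_two log_two_div_log_three_nonneg
  obtain ⟨j, rfl⟩ := Nat.exists_eq_add_one_of_ne_zero ha.ne'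
  rw [natCast_pow_rpow, Nat.totient_prime_pow_succ Nat.prime_two, Nat.add_one_sub_one, mul_one,
    pow_succ', Nat.cast_ofNat]
  push_cast
  gcongr
  exact rpow_le_self_of_one_le one_le_two (log_two_div_log_three_lt.le.trans (by norm_num))

lemma rpow_two_pow_lt_totient {a : ℕ} (ha : 3 ≤ a) : ((2 ^ a : ℕ) : ℝ) ^ α < φ (2 ^ a) := by
  obtain ⟨j, rfl⟩ := Nat.exists_eq_add_one_of_ne_zero (by omega : a ≠ 0)
  have hj : (2 : ℝ) ≤ j := by exact_mod_cast (by omega : 2 ≤ j)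
  have hexp : ((j : ℝ) + 1) * α < j := by nlinarith [log_two_div_log_three_lt]
  rw [Nat.totient_prime_pow_succ Nat.prime_two, Nat.add_one_sub_one, mul_one, Nat.cast_pow,
    Nat.cast_pow, Nat.cast_ofNat, ← rpow_natCast, ← rpow_mul zero_le_two, ← rpow_natCast]
  push_cast
  exact rpow_lt_rpow_of_exponent_lt one_lt_two hexp

lemma rpow_lt_totient_of_not_mem {m : ℕ} (hm : m ≠ 0)
    (hE : m ∉ ({1, 2, 3, 4, 6, 10, 12, 18, 30} : Finset ℕ)) : (m : ℝ) ^ α < φ m := by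
  obtain ⟨a, n, hn, rfl⟩ := Nat.exists_eq_two_pow_mul_odd hm
  have hcop : (2 ^ a).Coprime n := (Nat.coprime_two_left.mpr hn).pow_left a
  have hn0 : (0 : ℝ) < (n : ℝ) ^ α := rpow_pos_of_pos (by exact_mod_cast hn.pos) _
  by_cases hS : n ∈ ({1, 3, 5, 9, 15} : Finset ℕ)
  · obtain ha | ha := lt_or_ge a 3
    · have key : ∀ a < 3, ∀ n ∈ ({1, 3, 5, 9, 15} : Finset ℕ),
          2 ^ a * n ∉ ({1, 2, 3, 4, 6, 10, 12, 18, 30} : Finset ℕ) →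
          (2 ^ a * n) ^ 2 < φ (2 ^ a * n) ^ 3 := by
        decide
      exact natCast_rpow_lt_of_sq_lt_pow_three hm (key a ha n hS hE)
    · rw [natCast_mul_rpow, Nat.totient_mul hcop, Nat.cast_mul]
      exact mul_lt_mul (rpow_two_pow_lt_totient ha) (rpow_le_totient_of_odd hn) hn0
        (Nat.cast_nonneg _)
  · rw [natCast_mul_rpow, Nat.totient_mul hcop, Nat.cast_mul]
    calc ((2 ^ a : ℕ) : ℝ) ^ α * (n : ℝ) ^ α ≤ 2 ^ α * φ (2 ^ a) * (n : ℝ) ^ α := by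
          gcongr; exact rpow_two_pow_le_two_rpow_mul_totient a
      _ = φ (2 ^ a) * ((2 * n : ℕ) : ℝ) ^ α := by rw [natCast_mul_rpow, Nat.cast_ofNat]; ring
      _ < φ (2 ^ a) * φ n := by gcongr; exact rpow_two_mul_lt_totient_of_odd hn hS

lemma totient_le_rpow_of_mem {m : ℕ} (hm : m ∈ ({1, 2, 3, 4, 6, 10, 12, 18, 30} : Finset ℕ)) :
    (φ m : ℝ) ≤ (m : ℝ) ^ α := by
  simp only [Finset.mem_insert, Finset.mem_singleton] at hm
  obtain rfl | rfl | rfl | rfl | rfl | rfl | rfl | rfl | rfl := hm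
  · exact natCast_le_rpow_of_pow_le (a := 0) (b := 1) one_ne_zero (by decide) (by decide)
  · exact natCast_le_rpow_of_pow_le (a := 0) (b := 1) one_ne_zero (by decide) (by decide)
  · exact natCast_le_rpow_of_pow_le (a := 1) (b := 1) one_ne_zero (by decide) (by decide)
  · exact natCast_le_rpow_of_pow_le (a := 1) (b := 1) one_ne_zero (by decide) (by decide)
  · exact natCast_le_rpow_of_pow_le (a := 1) (b := 1) one_ne_zero (by decide) (by decide)
  · exact natCast_le_rpow_of_pow_le (a := 2) (b := 1) one_ne_zero (by decide) (by decide)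
  · exact natCast_le_rpow_of_pow_le (a := 2) (b := 1) one_ne_zero (by decide) (by decide)
  · exact natCast_le_rpow_of_pow_le (a := 13) (b := 5) (by norm_num) (by decide) (by decide)
  · exact natCast_le_rpow_of_pow_le (a := 3) (b := 1) one_ne_zero (by decide) (by decide)

/-- φ(m) ≤ m^(log 2/log 3) holds exactly for m ∈ {1,2,3,4,6,10,12,18,30}; in particular
φ(m) > m^(log 2/log 3) for all m ≥ 31. -/
theorem stmt_3 :
    (∀ m : ℕ, 31 ≤ m → (m : ℝ) ^ (Real.log 2 / Real.log 3) < Nat.totient m) ∧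
    (∀ m : ℕ, 1 ≤ m →
      ((Nat.totient m : ℝ) ≤ (m : ℝ) ^ (Real.log 2 / Real.log 3) ↔
        m ∈ ({1, 2, 3, 4, 6, 10, 12, 18, 30} : Set ℕ))) := by
  refine ⟨fun m hm => rpow_lt_totient_of_not_mem (by omega) (by simp; omega),
    fun m hm => ⟨fun hle => ?_, fun hE => totient_le_rpow_of_mem (by simpa using hE)⟩⟩
  by_contra hE
  exact (rpow_lt_totient_of_not_mem (by omega) (by simpa using hE)).not_ge hle
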